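/- Let k/(l·m^x) be a rational greater than 1 with gcd(k, l·m^x) = 1 (k, l, m, x positive integers). Suppose there exists a positive integer n = ∏_{i=1}^{s} p_i^{k_i} such that n^x divides l·m^x, and: (1) k/(l·m^x) < I(x, p_i·n) for all 1 ≤ i ≤ s; (2) σ_x(n)·l·(m/n)^x has a divisor d^x (d a positive integer) with gcd(d^x, k) = 1 and I(x,d) ≥ σ_x(p_j^{k_j+1})/(σ_x(p_j^{k_j+1}) − 1) for some 1 ≤ j ≤ s. Then k/(l·m^x) is an x-th abundancy outlaw. -/

import Mathlib

/-!
If `I(x, a) = k / (l m^x)` with `gcd(k, l m^x) = 1`, then `l m^x ∣ a^x`, so `n ∣ a`;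
write `a = n t`. Since `I(x, ·)` is monotone under divisibility, condition (1) forbids `p_i ∣ t`,
so `n` and `t` are coprime and the equation becomes `σ_x(n) l (m/n)^x σ_x(t) = k t^x`,
whence `d ∣ t`. With `S = σ_x(p_j^(k_j+1))` one has `S - 1 = p_j^x σ_x(p_j^k_j)`, so
`I(x, p_j n) = I(x, n) · S/(S-1)`, and `I(x, a) = I(x, n) I(x, t) ≥ I(x, n) I(x, d) ≥ I(x, p_j n)`
contradicts (1).
-/

open Finset Nat

/-- Sum of x-th powers of divisors. -/
def sigmaX (x n : ℕ) : ℕ := ∑ d ∈ n.divisors, d ^ x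

/-- The x-th abundancy index as a rational number. -/
def Iq (x n : ℕ) : ℚ := (sigmaX x n : ℚ) / (n : ℚ) ^ x

open ArithmeticFunction
open scoped ArithmeticFunction.sigma

theorem sigmaX_eq_sigma (x n : ℕ) : sigmaX x n = σ x n := sigma_apply.symm

theorem sigmaX_mul {x a b : ℕ} (h : a.Coprime b) :
    sigmaX x (a * b) = sigmaX x a * sigmaX x b := by
  simp only [sigmaX_eq_sigma, isMultiplicative_sigma.map_mul_of_coprime h]

theorem sigmaX_ne_zero (x : ℕ) {n : ℕ} (hn : n ≠ 0) : sigmaX x n ≠ 0 := by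
  simpa [sigmaX_eq_sigma] using hn

theorem sigmaX_prime_pow_succ {p : ℕ} (hp : p.Prime) (x e : ℕ) :
    sigmaX x (p ^ (e + 1)) = p ^ x * sigmaX x (p ^ e) + 1 := by
  simp only [sigmaX_eq_sigma, sigma_apply_prime_pow hp, mul_comm _ x, pow_mul]
  exact geom_sum_succ

theorem Iq_mul {x a b : ℕ} (h : a.Coprime b) : Iq x (a * b) = Iq x a * Iq x b := by
  simp only [Iq, sigmaX_mul h]
  push_cast
  ring

theorem Iq_eq_sum_inv_pow (x n : ℕ) : Iq x n = ∑ d ∈ n.divisors, ((d : ℚ) ^ x)⁻¹ := by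
  rw [Iq, sigmaX_eq_sigma, sigma_eq_sum_div, Nat.cast_sum, Finset.sum_div]
  refine Finset.sum_congr rfl fun d hd => ?_
  obtain ⟨hdn, hn⟩ := Nat.mem_divisors.1 hd
  have hd0 : (d : ℚ) ≠ 0 := by exact_mod_cast ne_zero_of_dvd_ne_zero hn hdn
  rw [Nat.cast_pow, Nat.cast_div hdn hd0, div_pow, div_div_cancel_left' (by positivity)]

theorem Iq_nonneg (x n : ℕ) : 0 ≤ Iq x n := by
  rw [Iq]; positivity

theorem Iq_le_of_dvd (x : ℕ) {a b : ℕ} (hb : b ≠ 0) (h : a ∣ b) : Iq x a ≤ Iq x b := by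
  rw [Iq_eq_sum_inv_pow, Iq_eq_sum_inv_pow]
  exact Finset.sum_le_sum_of_subset_of_nonneg (Nat.divisors_subset_of_dvd hb h)
    fun _ _ _ => by positivity

theorem Iq_prime_pow_succ {p : ℕ} (hp : p.Prime) (x e : ℕ) :
    Iq x (p ^ (e + 1)) = Iq x (p ^ e) *
      (sigmaX x (p ^ (e + 1)) / (sigmaX x (p ^ (e + 1)) - 1 : ℚ)) := by
  have hσ : (sigmaX x (p ^ e) : ℚ) ≠ 0 := by
    exact_mod_cast sigmaX_ne_zero x (pow_ne_zero e hp.ne_zero)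
  have hp0 : (p : ℚ) ≠ 0 := by exact_mod_cast hp.ne_zero
  simp only [Iq, sigmaX_prime_pow_succ hp]
  push_cast
  field_simp
  ring

theorem Iq_prime_mul {p r : ℕ} (hp : p.Prime) (hr : ¬ p ∣ r) (x e : ℕ) :
    Iq x (p * (p ^ e * r)) = Iq x (p ^ e * r) *
      (sigmaX x (p ^ (e + 1)) / (sigmaX x (p ^ (e + 1)) - 1 : ℚ)) := by
  have hcop := hp.coprime_iff_not_dvd.2 hr
  rw [← mul_assoc, ← pow_succ', Iq_mul (hcop.pow_left _), Iq_mul (hcop.pow_left _),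
    Iq_prime_pow_succ hp]
  ring

theorem sigmaX_mul_eq_of_Iq_eq {x a k L : ℕ} (ha : a ≠ 0) (hL : L ≠ 0)
    (h : Iq x a = k / L) : sigmaX x a * L = k * a ^ x := by
  rw [Iq, div_eq_div_iff (by positivity) (by positivity)] at h
  exact_mod_cast h

theorem exists_prod_eq_pow_mul_not_dvd {s : ℕ} {p : Fin s → ℕ} (hp : ∀ i, (p i).Prime)
    (hinj : Function.Injective p) (e : Fin s → ℕ) (j : Fin s) :
    ∃ r, ∏ i, p i ^ e i = p j ^ e j * r ∧ ¬ p j ∣ r := by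
  refine ⟨_, (Finset.mul_prod_erase _ _ (Finset.mem_univ j)).symm, fun h => ?_⟩
  obtain ⟨i, hi, hdvd⟩ := (Prime.dvd_finsetProd_iff (hp j).prime _).1 h
  have hji : p j = p i := (Nat.prime_dvd_prime_iff_eq (hp j) (hp i)).1 ((hp j).dvd_of_dvd_pow hdvd)
  exact Finset.ne_of_mem_erase hi (hinj hji).symm

theorem sigmaX_mul_cofactor_eq {x n t l w k : ℕ} (hn : n ≠ 0) (hnt : n.Coprime t)
    (h : sigmaX x (n * t) * (l * (n * w) ^ x) = k * (n * t) ^ x) :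
    sigmaX x n * l * w ^ x * sigmaX x t = k * t ^ x := by
  apply Nat.eq_of_mul_eq_mul_left (pow_pos (Nat.pos_of_ne_zero hn) x)
  calc n ^ x * (sigmaX x n * l * w ^ x * sigmaX x t)
      = sigmaX x (n * t) * (l * (n * w) ^ x) := by rw [sigmaX_mul hnt]; ring
    _ = k * (n * t) ^ x := h
    _ = n ^ x * (k * t ^ x) := by ring

theorem stmt_14_general (x k l m s : ℕ) (hx : 0 < x) (hl : 0 < l) (hm : 0 < m)
    (hcop : Nat.gcd k (l * m ^ x) = 1)
    (p : Fin s → ℕ) (e : Fin s → ℕ)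
    (hp : ∀ i, (p i).Prime) (hinj : Function.Injective p)
    (n : ℕ) (hn : n = ∏ i, p i ^ e i)
    (hndvd : n ^ x ∣ l * m ^ x) (hnm : n ∣ m)
    (h1 : ∀ i, (k : ℚ) / ((l : ℚ) * (m : ℚ) ^ x) < Iq x (p i * n))
    (d : ℕ)
    (hddvd : d ^ x ∣ sigmaX x n * l * (m / n) ^ x)
    (hdk : Nat.gcd (d ^ x) k = 1)
    (j : Fin s)
    (hId : Iq x d ≥ (sigmaX x (p j ^ (e j + 1)) : ℚ) / ((sigmaX x (p j ^ (e j + 1)) : ℚ) - 1)) :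
    ¬ ∃ a : ℕ, 0 < a ∧ Iq x a = (k : ℚ) / ((l : ℚ) * (m : ℚ) ^ x) := by
  rintro ⟨a, ha, hIa⟩
  have hn0 : n ≠ 0 := hn ▸ Finset.prod_ne_zero_iff.2 fun i _ => pow_ne_zero _ (hp i).ne_zero
  have key : sigmaX x a * (l * m ^ x) = k * a ^ x :=
    sigmaX_mul_eq_of_Iq_eq ha.ne' (by positivity) (by exact_mod_cast hIa)
  have hlm : l * m ^ x ∣ a ^ x :=
    (Nat.Coprime.symm hcop).dvd_of_dvd_mul_left ⟨_, key.symm.trans (mul_comm _ _)⟩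
  obtain ⟨t, rfl⟩ : n ∣ a := (Nat.pow_dvd_pow_iff hx.ne').1 (hndvd.trans hlm)
  have hpt : ∀ i, ¬ p i ∣ t := fun i ⟨u, hu⟩ =>
    (h1 i).not_ge (hIa ▸ Iq_le_of_dvd x ha.ne' ⟨u, by rw [hu]; ring⟩)
  have hnt : n.Coprime t := hn ▸ Nat.Coprime.prod_left fun i _ =>
    ((hp i).coprime_iff_not_dvd.2 (hpt i)).pow_left _
  have hdt : d ∣ t := by
    obtain ⟨w, rfl⟩ := hnm
    rw [Nat.mul_div_cancel_left w (Nat.pos_of_ne_zero hn0)] at hddvd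
    refine (Nat.pow_dvd_pow_iff hx.ne').1 (Nat.Coprime.dvd_of_dvd_mul_left hdk ?_)
    exact sigmaX_mul_cofactor_eq hn0 hnt key ▸ hddvd.mul_right _
  obtain ⟨r, hnr, hpr⟩ := exists_prod_eq_pow_mul_not_dvd hp hinj e j
  have hlt := h1 j
  rw [← hIa, Iq_mul hnt, hn, hnr, Iq_prime_mul (hp j) hpr] at hlt
  exact hlt.not_ge <| mul_le_mul_of_nonneg_left
    (hId.trans (Iq_le_of_dvd x (right_ne_zero_of_mul ha.ne') hdt)) (Iq_nonneg x _)

theorem stmt_14 (x k l m s : ℕ) (hx : 0 < x) (hk : 0 < k) (hl : 0 < l) (hm : 0 < m)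
    (hs : 0 < s)
    (hgt : (1 : ℚ) < (k : ℚ) / ((l : ℚ) * (m : ℚ) ^ x))
    (hcop : Nat.gcd k (l * m ^ x) = 1)
    (p : Fin s → ℕ) (e : Fin s → ℕ)
    (hp : ∀ i, (p i).Prime) (hinj : Function.Injective p) (he : ∀ i, 0 < e i)
    (n : ℕ) (hn : n = ∏ i, p i ^ e i)
    (hndvd : n ^ x ∣ l * m ^ x) (hnm : n ∣ m)
    (h1 : ∀ i, (k : ℚ) / ((l : ℚ) * (m : ℚ) ^ x) < Iq x (p i * n))
    (d : ℕ) (hd : 0 < d)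
    (hddvd : d ^ x ∣ sigmaX x n * l * (m / n) ^ x)
    (hdk : Nat.gcd (d ^ x) k = 1)
    (j : Fin s)
    (hId : Iq x d ≥ (sigmaX x (p j ^ (e j + 1)) : ℚ) / ((sigmaX x (p j ^ (e j + 1)) : ℚ) - 1)) :
    ¬ ∃ a : ℕ, 0 < a ∧ Iq x a = (k : ℚ) / ((l : ℚ) * (m : ℚ) ^ x) :=
  stmt_14_general x k l m s hx hl hm hcop p e hp hinj n hn hndvd hnm h1 d hddvd hdk j hId
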